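/- arXiv:2110.13753 — 2 statements merged into one kernel-verified Lean document; each statement's English description precedes it below -/
import Mathlib

section
/- For every n ≥ 0, the number of octant walks of length n from (0,0) to (0,0) equals T₃(n). Here an octant walk of length n is a function w : {0,…,n−1} → ℤ² such that each w(i) lies in {(1,0),(0,1),(−1,1),(−1,0),(0,−1),(1,−1),(0,0)}, every partial sum p_m = Σ_{i<m} w(i) (0 ≤ m ≤ n) lies in the region {(x,y) ∈ ℤ² : x ≥ y ≥ 0}, and whenever w(i) = (0,0) the point p_i = (x,y) at which the zero step is taken satisfies x > y. -/
open scoped BigOperators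

/-- The Laurent monomial `xᵃyᵇ` in `ℤ[x,x⁻¹,y,y⁻¹]`. -/
noncomputable def mono (a b : ℤ) : AddMonoidAlgebra ℤ (ℤ × ℤ) := AddMonoidAlgebra.single (a, b) 1

/-- `K = 1 + x + y + xy + x⁻¹ + y⁻¹ + x⁻¹y⁻¹`. -/
noncomputable def Kpoly : AddMonoidAlgebra ℤ (ℤ × ℤ) :=
  mono 0 0 + mono 1 0 + mono 0 1 + mono 1 1 + mono (-1) 0 + mono 0 (-1) + mono (-1) (-1)

/-- `Δ = x⁻²y⁻³·(x²y³ − xy³ + x⁻¹y² − x⁻²y + x⁻³y⁻¹ − x⁻³y⁻² + x⁻²y⁻³ − x⁻¹y⁻³ + xy⁻²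
      − x²y⁻¹ + x³y − x³y²)`, expanded. -/
noncomputable def Dpoly : AddMonoidAlgebra ℤ (ℤ × ℤ) :=
  mono 0 0 - mono (-1) 0 + mono (-3) (-1) - mono (-4) (-2) + mono (-5) (-4) - mono (-5) (-5)
  + mono (-4) (-6) - mono (-3) (-6) + mono (-1) (-5) - mono 0 (-4) + mono 1 (-2) - mono 1 (-1)

/-- `T₃(n)` is the constant term (coefficient of `x⁰y⁰`) of `Δ·Kⁿ`. -/
noncomputable def T3 (n : ℕ) : ℤ := (Dpoly * Kpoly ^ n).coeff (0, 0)


/-- The `m`-th partial sum `p_m = Σ_{i<m} w(i)` of a walk `w : Fin n → ℤ²`. -/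
def partialSum {n : ℕ} (w : Fin n → ℤ × ℤ) (m : ℕ) : ℤ × ℤ :=
  ∑ i ∈ Finset.univ.filter (fun i : Fin n => (i : ℕ) < m), w i

/-- An octant walk of length `n` from `(0,0)` to `(0,0)`: steps in
`{(1,0),(0,1),(−1,1),(−1,0),(0,−1),(1,−1),(0,0)}`, all partial sums in
`{(x,y) : x ≥ y ≥ 0}`, ending at `(0,0)`, and a zero step is only allowed at a
point `(x,y)` with `x > y`. -/
def IsOctantWalk {n : ℕ} (w : Fin n → ℤ × ℤ) : Prop :=
  (∀ i, w i ∈ ({(1, 0), (0, 1), (-1, 1), (-1, 0), (0, -1), (1, -1), (0, 0)} : Set (ℤ × ℤ))) ∧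
  (∀ m ≤ n, (partialSum w m).1 ≥ (partialSum w m).2 ∧ (partialSum w m).2 ≥ 0) ∧
  partialSum w n = (0, 0) ∧
  (∀ i : Fin n, w i = (0, 0) → (partialSum w (i : ℕ)).1 > (partialSum w (i : ℕ)).2)

/-!
Write `F_n(u, v)` for the coefficient of `xᵘyᵛ` in `Δ·Kⁿ`. The twelve monomials of `Δ` form the
orbit of `x⁰y⁰` under the dihedral group of order 12 generated by the reflections
`(u, v) ↦ (v + 1, u - 1)` and `(u, v) ↦ (v - u - 1, v)`, each with the sign of the group element;
since `K` is invariant under the linear parts of these reflections, every `F_n` is antisymmetric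
under both. In sheared coordinates `G_n(a, b) = F_n(a, a + b)` the exponents of `K` become the
seven octant steps, so `G_{n+1}(p) = Σ_s G_n(p - s)`, and the two mirror lines become the lines
`b = -1` and `b = a + 1` just outside the octant, where `G_n` vanishes. The only other point outside
the octant reachable in one step is `(a - 1, a + 1)`, reached from the diagonal point `(a, a)`;
there `G_n` takes the value `-G_n(a, a)`, which cancels exactly the forbidden zero step at `(a, a)`.
Hence on the octant `G_n` satisfies the same recursion as the number of octant walks ending at a
given point, and in these coordinates the only monomial of `Δ` inside the octant is `x⁰y⁰`.
-/

open AddMonoidAlgebra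

lemma coeff_perm_eq_neg_of_mapDomain_eq_neg {R M : Type*} [Ring R] [Add M] {e : Equiv.Perm M}
    {f : AddMonoidAlgebra R M} (hf : mapDomainAddEquiv R e f = -f) (q : M) :
    f.coeff (e q) = -f.coeff q :=
  neg_eq_iff_eq_neg.mp <| by simpa [eq_comm] using congrArg (fun g => g.coeff (e q)) hf

def bottomRefl : Equiv.Perm (ℤ × ℤ) :=
  Function.Involutive.toPerm (fun q => (q.2 + 1, q.1 - 1)) fun _ =>
    Prod.ext (by dsimp only; ring) (by dsimp only; ring)

def diagRefl : Equiv.Perm (ℤ × ℤ) :=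
  Function.Involutive.toPerm (fun q => (q.2 - q.1 - 1, q.2)) fun _ =>
    Prod.ext (by dsimp only; ring) rfl

lemma bottomRefl_apply (u v : ℤ) : bottomRefl (u, v) = (v + 1, u - 1) := rfl

lemma diagRefl_apply (u v : ℤ) : diagRefl (u, v) = (v - u - 1, v) := rfl

lemma mapDomain_bottomRefl_Dpoly : mapDomainAddEquiv ℤ bottomRefl Dpoly = -Dpoly := by
  simp only [Dpoly, mono, map_add, map_sub, mapDomainAddEquiv_single, bottomRefl_apply]
  norm_num
  abel

lemma mapDomain_diagRefl_Dpoly : mapDomainAddEquiv ℤ diagRefl Dpoly = -Dpoly := by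
  simp only [Dpoly, mono, map_add, map_sub, mapDomainAddEquiv_single, diagRefl_apply]
  norm_num
  abel

lemma coeff_mul_Kpoly (f : AddMonoidAlgebra ℤ (ℤ × ℤ)) (a b : ℤ) :
    (f * Kpoly).coeff (a, b) = f.coeff (a, b) + f.coeff (a - 1, b) + f.coeff (a, b - 1)
      + f.coeff (a - 1, b - 1) + f.coeff (a + 1, b) + f.coeff (a, b + 1)
      + f.coeff (a + 1, b + 1) := by
  simp [Kpoly, mono, mul_add, sub_eq_add_neg]

noncomputable def deltaKCoeff (n : ℕ) (q : ℤ × ℤ) : ℤ := (Dpoly * Kpoly ^ n).coeff q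

lemma deltaKCoeff_zero (q : ℤ × ℤ) : deltaKCoeff 0 q = Dpoly.coeff q := by
  simp [deltaKCoeff]

lemma deltaKCoeff_succ (n : ℕ) (a b : ℤ) :
    deltaKCoeff (n + 1) (a, b) = deltaKCoeff n (a, b) + deltaKCoeff n (a - 1, b)
      + deltaKCoeff n (a, b - 1) + deltaKCoeff n (a - 1, b - 1) + deltaKCoeff n (a + 1, b)
      + deltaKCoeff n (a, b + 1) + deltaKCoeff n (a + 1, b + 1) := by
  simp only [deltaKCoeff, pow_succ, ← mul_assoc, coeff_mul_Kpoly]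

lemma deltaKCoeff_bottomRefl (n : ℕ) (q : ℤ × ℤ) :
    deltaKCoeff n (bottomRefl q) = -deltaKCoeff n q := by
  induction n generalizing q with
  | zero =>
    simpa only [deltaKCoeff_zero] using
      coeff_perm_eq_neg_of_mapDomain_eq_neg mapDomain_bottomRefl_Dpoly q
  | succ n ih =>
    obtain ⟨u, v⟩ := q
    have h := fun u v => ih (u, v)
    simp only [bottomRefl_apply] at h ⊢
    rw [deltaKCoeff_succ, deltaKCoeff_succ]
    linear_combination (norm := ring_nf) h u v + h (u - 1) v + h u (v - 1) + h (u - 1) (v - 1)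
      + h (u + 1) v + h u (v + 1) + h (u + 1) (v + 1)

lemma deltaKCoeff_diagRefl (n : ℕ) (q : ℤ × ℤ) :
    deltaKCoeff n (diagRefl q) = -deltaKCoeff n q := by
  induction n generalizing q with
  | zero =>
    simpa only [deltaKCoeff_zero] using
      coeff_perm_eq_neg_of_mapDomain_eq_neg mapDomain_diagRefl_Dpoly q
  | succ n ih =>
    obtain ⟨u, v⟩ := q
    have h := fun u v => ih (u, v)
    simp only [diagRefl_apply] at h ⊢
    rw [deltaKCoeff_succ, deltaKCoeff_succ]
    linear_combination (norm := ring_nf) h u v + h (u - 1) v + h u (v - 1) + h (u - 1) (v - 1)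
      + h (u + 1) v + h u (v + 1) + h (u + 1) (v + 1)

lemma deltaKCoeff_eq_zero_of_bottomRefl_eq {n : ℕ} {q : ℤ × ℤ} (hq : bottomRefl q = q) :
    deltaKCoeff n q = 0 :=
  self_eq_neg.mp <| by simpa [hq] using deltaKCoeff_bottomRefl n q

lemma deltaKCoeff_eq_zero_of_diagRefl_eq {n : ℕ} {q : ℤ × ℤ} (hq : diagRefl q = q) :
    deltaKCoeff n q = 0 :=
  self_eq_neg.mp <| by simpa [hq] using deltaKCoeff_diagRefl n q

def octantSteps : Finset (ℤ × ℤ) := {(1, 0), (0, 1), (-1, 1), (-1, 0), (0, -1), (1, -1), (0, 0)}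

def InOctant (p : ℤ × ℤ) : Prop := p.2 ≤ p.1 ∧ 0 ≤ p.2

lemma inOctant_iff (a b : ℤ) : InOctant (a, b) ↔ b ≤ a ∧ 0 ≤ b := Iff.rfl

instance : DecidablePred InOctant := fun p => inferInstanceAs (Decidable (p.2 ≤ p.1 ∧ 0 ≤ p.2))

/-- The possible last steps of an octant walk ending at `p`; a final zero step is taken at `p`. -/
def stepsAt (p : ℤ × ℤ) : Finset (ℤ × ℤ) := octantSteps.filter fun s => s = 0 → p.2 < p.1

lemma sum_octantSteps {M : Type*} [AddCommMonoid M] (f : ℤ × ℤ → M) :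
    ∑ s ∈ octantSteps, f s =
      f (1, 0) + f (0, 1) + f (-1, 1) + f (-1, 0) + f (0, -1) + f (1, -1) + f (0, 0) := by
  simp [octantSteps, add_assoc]

lemma sum_stepsAt {M : Type*} [AddCommMonoid M] (p : ℤ × ℤ) (f : ℤ × ℤ → M) :
    ∑ s ∈ stepsAt p, f s = f (1, 0) + f (0, 1) + f (-1, 1) + f (-1, 0) + f (0, -1) + f (1, -1)
      + if p.2 < p.1 then f (0, 0) else 0 := by
  simp [stepsAt, Finset.sum_filter, sum_octantSteps]

noncomputable def shearedCoeff (n : ℕ) (p : ℤ × ℤ) : ℤ := deltaKCoeff n (p.1, p.1 + p.2)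

lemma shearedCoeff_succ (n : ℕ) (p : ℤ × ℤ) :
    shearedCoeff (n + 1) p = ∑ s ∈ octantSteps, shearedCoeff n (p - s) := by
  obtain ⟨a, b⟩ := p
  simp only [sum_octantSteps, shearedCoeff, deltaKCoeff_succ, Prod.mk_sub_mk]
  ring_nf

lemma shearedCoeff_eq_zero_of_snd_eq_neg_one {n : ℕ} {a b : ℤ} (hb : b = -1) :
    shearedCoeff n (a, b) = 0 :=
  deltaKCoeff_eq_zero_of_bottomRefl_eq <| by rw [bottomRefl_apply]; ext <;> dsimp only <;> omega

lemma shearedCoeff_eq_zero_of_snd_eq_add_one {n : ℕ} {a b : ℤ} (hb : b = a + 1) :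
    shearedCoeff n (a, b) = 0 :=
  deltaKCoeff_eq_zero_of_diagRefl_eq <| by rw [diagRefl_apply]; ext <;> dsimp only; omega

lemma shearedCoeff_eq_neg_of_snd_eq_add_two {n : ℕ} {a b : ℤ} (hb : b = a + 2) :
    shearedCoeff n (a, b) = -shearedCoeff n (a + 1, b - 1) := by
  have h := deltaKCoeff_diagRefl n (a, a + b)
  rw [diagRefl_apply] at h
  have e : (a + 1, a + 1 + (b - 1)) = (a + b - a - 1, a + b) := by ext <;> dsimp only <;> omega
  simp only [shearedCoeff, e, h, neg_neg]

lemma shearedCoeff_zero_of_inOctant {p : ℤ × ℤ} (hp : InOctant p) :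
    shearedCoeff 0 p = if p = 0 then 1 else 0 := by
  obtain ⟨a, b⟩ := p
  obtain ⟨hba, hb⟩ : b ≤ a ∧ 0 ≤ b := hp
  simp only [shearedCoeff, deltaKCoeff_zero, Dpoly, mono, coeff_sub, coeff_add, coeff_single,
    Finsupp.sub_apply, Finsupp.add_apply, Finsupp.single_apply, Prod.mk.injEq, Prod.mk_eq_zero]
  simp (disch := omega) only [if_neg, sub_zero, add_zero]
  split_ifs <;> omega

lemma shearedCoeff_succ_of_inOctant (n : ℕ) {p : ℤ × ℤ} (hp : InOctant p) :
    shearedCoeff (n + 1) p =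
      ∑ s ∈ stepsAt p, if InOctant (p - s) then shearedCoeff n (p - s) else 0 := by
  obtain ⟨a, b⟩ := p
  obtain ⟨hba, hb⟩ : b ≤ a ∧ 0 ≤ b := hp
  rw [shearedCoeff_succ, sum_octantSteps, sum_stepsAt]
  simp only [Prod.mk_sub_mk, inOctant_iff]
  rcases (show b = 0 ∨ 0 < b by omega) with hb0 | hb0 <;>
  rcases (show a = b ∨ a = b + 1 ∨ b + 1 < a by omega) with hab | hab | hab <;>
  simp (disch := omega) only [if_pos, if_neg, shearedCoeff_eq_zero_of_snd_eq_neg_one,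
    shearedCoeff_eq_zero_of_snd_eq_add_one, shearedCoeff_eq_neg_of_snd_eq_add_two] <;> ring_nf

def IsOctantWalkTo (p : ℤ × ℤ) {n : ℕ} (w : Fin n → ℤ × ℤ) : Prop :=
  (∀ i, w i ∈ octantSteps) ∧ (∀ m ≤ n, InOctant (partialSum w m)) ∧ partialSum w n = p ∧
    ∀ i : Fin n, w i = 0 → (partialSum w i).2 < (partialSum w i).1

lemma isOctantWalk_iff {n : ℕ} (w : Fin n → ℤ × ℤ) : IsOctantWalk w ↔ IsOctantWalkTo 0 w := by
  simp [IsOctantWalk, IsOctantWalkTo, octantSteps, InOctant, Prod.mk_zero_zero]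

lemma partialSum_snoc {n : ℕ} (u : Fin n → ℤ × ℤ) (s : ℤ × ℤ) (m : ℕ) :
    partialSum (Fin.snoc u s : Fin (n + 1) → ℤ × ℤ) m =
      partialSum u m + if n < m then s else 0 := by
  simp [partialSum, Finset.sum_filter, Fin.sum_univ_castSucc]

lemma partialSum_snoc_of_le {n m : ℕ} (u : Fin n → ℤ × ℤ) (s : ℤ × ℤ) (hm : m ≤ n) :
    partialSum (Fin.snoc u s : Fin (n + 1) → ℤ × ℤ) m = partialSum u m := by
  simp [partialSum_snoc, hm]

lemma partialSum_eq_sum_of_le {n m : ℕ} (w : Fin n → ℤ × ℤ) (hm : n ≤ m) :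
    partialSum w m = ∑ i, w i := by
  rw [partialSum, Finset.filter_true_of_mem fun i _ => by omega]

lemma partialSum_snoc_last {n : ℕ} (u : Fin n → ℤ × ℤ) (s : ℤ × ℤ) :
    partialSum (Fin.snoc u s : Fin (n + 1) → ℤ × ℤ) (n + 1) = partialSum u n + s := by
  simp [partialSum_eq_sum_of_le, Fin.sum_univ_castSucc]

lemma isOctantWalkTo_fin_zero_iff (p : ℤ × ℤ) (w : Fin 0 → ℤ × ℤ) : IsOctantWalkTo p w ↔ p = 0 := by
  simp [IsOctantWalkTo, partialSum, InOctant, eq_comm]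

lemma isOctantWalkTo_snoc_iff {n : ℕ} (p s : ℤ × ℤ) (u : Fin n → ℤ × ℤ) :
    IsOctantWalkTo p (Fin.snoc u s : Fin (n + 1) → ℤ × ℤ) ↔
      IsOctantWalkTo (p - s) u ∧ s ∈ stepsAt p ∧ InOctant p := by
  simp +contextual only [IsOctantWalkTo, Fin.forall_fin_succ', Fin.snoc_castSucc, Fin.snoc_last,
    partialSum_snoc_of_le, partialSum_snoc_last, Nat.le_succ_iff, or_imp, forall_and, forall_eq,
    Fin.val_castSucc, Fin.val_last, stepsAt, Finset.mem_filter, le_refl, Fin.is_le']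
  constructor
  · rintro ⟨⟨hu, hs⟩, ⟨hreg, hp⟩, rfl, hzero, hs0⟩
    exact ⟨⟨hu, hreg, by simp, hzero⟩, ⟨hs, fun h => by simpa [h] using hs0 h⟩, hp⟩
  · rintro ⟨⟨hu, hreg, hend, hzero⟩, ⟨hs, hs0⟩, hp⟩
    obtain rfl := eq_sub_iff_add_eq.mp hend
    exact ⟨⟨hu, hs⟩, ⟨hreg, hp⟩, rfl, hzero, fun h => by simpa [h] using hs0 h⟩

noncomputable def walkCount (n : ℕ) (p : ℤ × ℤ) : ℕ :=
  Nat.card {w : Fin n → ℤ × ℤ // IsOctantWalkTo p w}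

instance (n : ℕ) (p : ℤ × ℤ) : Finite {w : Fin n → ℤ × ℤ // IsOctantWalkTo p w} :=
  Finite.of_injective (fun w i => (⟨w.1 i, w.2.1 i⟩ : octantSteps)) fun _ _ h =>
    Subtype.ext <| funext fun i => congrArg Subtype.val (congrFun h i)

lemma walkCount_zero (p : ℤ × ℤ) : walkCount 0 p = if p = 0 then 1 else 0 := by
  by_cases hp : p = 0 <;> simp [walkCount, isOctantWalkTo_fin_zero_iff, hp]

lemma walkCount_eq_zero_of_not_inOctant {n : ℕ} {p : ℤ × ℤ} (hp : ¬InOctant p) :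
    walkCount n p = 0 :=
  Nat.card_eq_zero.mpr <| .inl ⟨fun w => hp (w.2.2.2.1 ▸ w.2.2.1 n le_rfl)⟩

def octantWalksSuccEquiv (n : ℕ) {p : ℤ × ℤ} (hp : InOctant p) :
    {w : Fin (n + 1) → ℤ × ℤ // IsOctantWalkTo p w} ≃
      Σ s : stepsAt p, {u : Fin n → ℤ × ℤ // IsOctantWalkTo (p - s) u} where
  toFun w :=
    have h := (isOctantWalkTo_snoc_iff p _ (Fin.init w.1)).mp ((Fin.snoc_init_self w.1).symm ▸ w.2)
    ⟨⟨_, h.2.1⟩, ⟨Fin.init w.1, h.1⟩⟩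
  invFun x := ⟨Fin.snoc x.2.1 x.1.1, (isOctantWalkTo_snoc_iff p _ _).mpr ⟨x.2.2, x.1.2, hp⟩⟩
  left_inv w := Subtype.ext (Fin.snoc_init_self w.1)
  right_inv x := Sigma.subtype_ext (Subtype.ext (by simp)) (by simp)

lemma walkCount_succ (n : ℕ) {p : ℤ × ℤ} (hp : InOctant p) :
    walkCount (n + 1) p = ∑ s ∈ stepsAt p, walkCount n (p - s) := by
  rw [walkCount, Nat.card_congr (octantWalksSuccEquiv n hp), Nat.card_sigma]
  exact Finset.sum_coe_sort (stepsAt p) fun s => walkCount n (p - s)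

lemma walkCount_eq_shearedCoeff (n : ℕ) {p : ℤ × ℤ} (hp : InOctant p) :
    (walkCount n p : ℤ) = shearedCoeff n p := by
  induction n generalizing p with
  | zero =>
    rw [walkCount_zero, shearedCoeff_zero_of_inOctant hp]
    split_ifs <;> rfl
  | succ n ih =>
    rw [walkCount_succ n hp, shearedCoeff_succ_of_inOctant n hp, Nat.cast_sum]
    refine Finset.sum_congr rfl fun s _ => ?_
    split_ifs with hs
    · exact ih hs
    · rw [walkCount_eq_zero_of_not_inOctant hs, Nat.cast_zero]

/-- For every `n ≥ 0`, the number of octant walks of length `n` from `(0,0)` to `(0,0)`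
equals `T₃(n)`. -/
theorem card_octantWalks_eq_T3 (n : ℕ) :
    (Nat.card {w : Fin n → ℤ × ℤ // IsOctantWalk w} : ℤ) = T3 n := by
  rw [Nat.card_congr (Equiv.subtypeEquivRight isOctantWalk_iff)]
  exact walkCount_eq_shearedCoeff n ⟨le_rfl, le_rfl⟩
end

section
/- The sequence C₂(n) = S₃(n) satisfies C₂(0) = 1, C₂(1) = 3, and for all n ≥ 0 the recurrence (n+5)(n+6)·C₂(n+2) − 2(5n² + 36n + 61)·C₂(n+1) + 9(n+1)(n+4)·C₂(n) = 0. -/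
open scoped BigOperators

/-- `K_k = k + x + y + x⁻¹ + y⁻¹ + xy⁻¹ + yx⁻¹`. -/
noncomputable def Kq (k : ℕ) : AddMonoidAlgebra ℤ (ℤ × ℤ) :=
  AddMonoidAlgebra.single (0, 0) (k : ℤ)
  + mono 1 0 + mono 0 1 + mono (-1) 0 + mono 0 (-1) + mono 1 (-1) + mono (-1) 1

/-- `W = 1 − x²y⁻¹ + x³ − x²y² + y³ − y²x⁻¹`. -/
noncomputable def Wq : AddMonoidAlgebra ℤ (ℤ × ℤ) :=
  mono 0 0 - mono 2 (-1) + mono 3 0 - mono 2 2 + mono 0 3 - mono (-1) 2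

/-- `S_k(n)` is the constant term (coefficient of `x⁰y⁰`) of `W·K_kⁿ`. -/
noncomputable def Sq (k : ℕ) (n : ℕ) : ℤ := (Wq * Kq k ^ n).coeff (0, 0)

/-!
Creative telescoping. The constant term of a Laurent polynomial is unchanged by the lattice
automorphism `ρ : (a, b) ↦ (-b, a + b)` of order six, which permutes the six non-constant monomials
of `K_k`, and it vanishes on the images of the Euler derivations `θ₁ = x ∂/∂x` and `θ₂ = y ∂/∂y`.
An explicit certificate `(G₁, G₂, U)` exhibits the recurrence operator applied to `W·K₃ⁿ` as
`θ₁(G₁ K₃ⁿ⁺¹) + θ₂(G₂ K₃ⁿ⁺¹) + (1 - ρ)(U K₃ⁿ)`, whose constant term is zero.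
-/

open AddMonoidAlgebra

namespace AddMonoidAlgebra

variable {k G : Type*} [CommSemiring k] [AddCommMonoid G]

noncomputable def weightLinearMap (w : G →+ k) : k[G] →ₗ[k] k[G] :=
  Finsupp.lsum k (fun g => w g • lsingle g) ∘ₗ (coeffLinearEquiv k).toLinearMap

theorem weightLinearMap_single (w : G →+ k) (g : G) (c : k) :
    weightLinearMap w (single g c) = single g (w g * c) := by
  simp [weightLinearMap, smul_single]

theorem weightLinearMap_mul (w : G →+ k) (f₁ f₂ : k[G]) :
    weightLinearMap w (f₁ * f₂) = f₁ * weightLinearMap w f₂ + f₂ * weightLinearMap w f₁ := by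
  induction f₁ using induction_linear with
  | zero => simp
  | add a b ha hb => simp only [add_mul, map_add, ha, hb]; ring
  | single g c =>
    induction f₂ using induction_linear with
    | zero => simp
    | add a b ha hb => simp only [mul_add, map_add, ha, hb]; ring
    | single h d =>
      simp only [weightLinearMap_single, single_mul_single, add_comm h g, ← single_add, map_add]
      congr 1; ring

noncomputable def weightDerivation (w : G →+ k) : Derivation k k[G] k[G] where
  toLinearMap := weightLinearMap w
  map_one_eq_zero' := by simp [one_def, weightLinearMap_single]
  leibniz' := weightLinearMap_mul w

@[simp]
theorem weightDerivation_single (w : G →+ k) (g : G) (c : k) :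
    weightDerivation w (single g c) = single g (w g * c) :=
  weightLinearMap_single w g c

theorem coeff_weightDerivation (w : G →+ k) (f : k[G]) (g : G) :
    (weightDerivation w f).coeff g = w g * f.coeff g := by
  induction f using induction_linear with
  | zero => simp
  | add a b ha hb => simp [ha, hb, mul_add]
  | single h c => by_cases hg : h = g <;> simp [coeff_single, hg]

theorem coeff_zero_weightDerivation (w : G →+ k) (f : k[G]) :
    (weightDerivation w f).coeff 0 = 0 := by
  simp [coeff_weightDerivation]

theorem coeff_zero_domCongr {H : Type*} [AddCommMonoid H] (e : G ≃+ H) (f : k[G]) :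
    (domCongr k k e f).coeff 0 = f.coeff 0 := by
  simp

end AddMonoidAlgebra

def hexRotation : ℤ × ℤ ≃+ ℤ × ℤ where
  toFun p := (-p.2, p.1 + p.2)
  invFun p := (p.1 + p.2, -p.1)
  left_inv p := by simp
  right_inv p := by simp
  map_add' p q := by simp only [Prod.fst_add, Prod.snd_add, Prod.mk_add_mk]; congr 1 <;> ring

local notation "θ₁" => weightDerivation (AddMonoidHom.fst ℤ ℤ)
local notation "θ₂" => weightDerivation (AddMonoidHom.snd ℤ ℤ)
local notation "ρ" => domCongr ℤ ℤ hexRotation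

theorem mono_mul_mono (a b c d : ℤ) : mono a b * mono c d = mono (a + c) (b + d) := by
  simp [mono, single_mul_single]

theorem single_eq_smul_mono (a b c : ℤ) : single (a, b) c = c • mono a b := by
  simp [mono, smul_single]

theorem weightDerivation_mono (w : ℤ × ℤ →+ ℤ) (a b : ℤ) :
    weightDerivation w (mono a b) = w (a, b) • mono a b := by
  simp [mono, smul_single]

theorem hexRotation_mono (a b : ℤ) : ρ (mono a b) = mono (-b) (a + b) := by
  simp [mono]; rfl

theorem coeff_mono_zero (a b : ℤ) : (mono a b).coeff (0, 0) = if a = 0 ∧ b = 0 then 1 else 0 := by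
  simp [mono, coeff_single, Finsupp.single_apply]

theorem Kq_eq (k : ℕ) : Kq k = (k : ℤ) • mono 0 0
    + mono 1 0 + mono 0 1 + mono (-1) 0 + mono 0 (-1) + mono 1 (-1) + mono (-1) 1 := by
  rw [Kq, single_eq_smul_mono]

theorem hexRotation_Kq (k : ℕ) : ρ (Kq k) = Kq k := by
  simp only [Kq_eq, map_add, map_zsmul, hexRotation_mono]
  norm_num
  abel

-- The certificate `(G₁, G₂, U)`, found by solving a linear system for its coefficients.
noncomputable def certificateX (n : ℤ) : ℤ[ℤ × ℤ] :=
  single (-3, -2) (-64)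
    + single (-3, -1) (-277 + 32 * n)
    + single (-3, 0) (277 + 277 * n)
    + single (-3, 1) (-686 - 32 * n)
    + single (-3, 2) (-1910 - 586 * n)
    + single (-3, 3) (-70)
    + single (-2, -3) (-128 - 32 * n)
    + single (-2, -2) (-405 - 277 * n)
    + single (-2, -1) (-541 - 554 * n)
    + single (-2, 0) (703 + 586 * n)
    + single (-2, 1) 216
    + single (-2, 2) (130 + 6 * n)
    + single (-2, 3) (-36 + 6 * n)
    + single (-1, -3) (1108 + 277 * n)
    + single (-1, -2) (1715 - 309 * n)
    + single (-1, -1) (-826)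
    + single (-1, 0) (-126 - 6 * n)
    + single (-1, 1) (198 + 6 * n)
    + single (-1, 2) (342 - 24 * n)
    + single (-1, 3) (-138 + 6 * n)
    + single (-1, 4) (-30 - 6 * n)
    + single (0, -3) 735
    + single (0, -2) 201
    + single (0, -1) (-282 - 12 * n)
    + single (0, 0) (-159 + 30 * n)
    + single (0, 1) (36 - 24 * n)
    + single (0, 2) (120 - 24 * n)
    + single (0, 3) (-24 + 30 * n)
    + single (0, 4) (-60 - 12 * n)
    + single (1, -3) 171
    + single (1, -2) (-270 - 6 * n)
    + single (1, -1) (45 + 18 * n)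
    + single (1, 0) (24 + 42 * n)
    + single (1, 1) (66 - 60 * n)
    + single (1, 2) (90 + 42 * n)
    + single (1, 3) (-18 + 18 * n)
    + single (1, 4) (-30 - 6 * n)
    + single (2, -3) 45
    + single (2, -2) (-72 - 12 * n)
    + single (2, -1) (-54 + 30 * n)
    + single (2, 0) (-6 - 24 * n)
    + single (2, 1) (-24 - 24 * n)
    + single (2, 2) (42 + 30 * n)
    + single (2, 3) (-72 - 12 * n)
    + single (3, -3) 36
    + single (3, -2) (18 - 6 * n)
    + single (3, -1) (30 + 6 * n)
    + single (3, 0) (-24 - 24 * n)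
    + single (3, 1) (12 + 6 * n)
    + single (3, 2) (-42 - 6 * n)
    + single (4, -1) (36 + 6 * n)
    + single (4, 0) (36 + 6 * n)

noncomputable def certificateY (n : ℤ) : ℤ[ℤ × ℤ] :=
  single (-3, -2) (128 + 32 * n)
    + single (-3, -1) (1236 + 309 * n)
    + single (-3, 0) (944 + 245 * n)
    + single (-3, 1) (-2742 - 618 * n)
    + single (-3, 2) (-2554 - 586 * n)
    + single (-3, 3) (-70)
    + single (-2, -3) 64
    + single (-2, -2) (-181 - 309 * n)
    + single (-2, -1) (183 - 277 * n)
    + single (-2, 0) (99 + 32 * n)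
    + single (-2, 1) (1108 + 586 * n)
    + single (-2, 2) 118
    + single (-2, 3) (-14)
    + single (-1, -3) (-309 - 32 * n)
    + single (-1, -2) (-1075)
    + single (-1, -1) 592
    + single (-1, 0) (-505)
    + single (-1, 1) 138
    + single (-1, 2) 138
    + single (-1, 3) (-60)
    + single (-1, 4) 24
    + single (0, -3) (309 + 309 * n)
    + single (0, -2) 18
    + single (0, -1) (-84)
    + single (0, 0) (-294)
    + single (0, 1) 54
    + single (0, 2) 18
    + single (0, 4) 30
    + single (1, -3) (-105)
    + single (1, -2) (-60)
    + single (1, -1) (-27)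
    + single (1, 1) (-162)
    + single (1, 2) (-24)
    + single (1, 3) 12
    + single (1, 4) 6
    + single (2, -3) 72
    + single (2, -2) (-45)
    + single (2, -1) (-114)
    + single (2, 2) (-12)
    + single (3, -3) 36
    + single (3, -2) 96
    + single (3, -1) 72
    + single (3, 1) (-18)
    + single (3, 2) (-6)

noncomputable def certificateRot (n : ℤ) : ℤ[ℤ × ℤ] :=
  single (-3, -1) (90 - 705 * n - 309 * n ^ 2)
    + single (-3, 0) (1632 + 1024 * n - 32 * n ^ 2)
    + single (-3, 1) (-155 - 558 * n - 277 * n ^ 2)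
    + single (-3, 2) (-104 + 72 * n + 32 * n ^ 2)
    + single (-3, 3) (1542 + 2434 * n + 586 * n ^ 2)
    + single (-3, 4) (-162)
    + single (-2, -2) (564 + 204 * n)
    + single (-2, -1) 1188
    + single (-2, 0) 558
    + single (-2, 1) 36
    + single (-2, 2) (-468)
    + single (-2, 3) (-468)
    + single (-2, 4) (-208 - 82 * n)
    + single (-1, -3) (-189 - 63 * n)
    + single (-1, -2) 36
    + single (-1, 4) (48 + 12 * n)
    + single (1, -3) 36
    + single (2, -3) (-18)
    + single (3, -3) 36

set_option maxHeartbeats 1000000 in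
theorem certificate_identity (n : ℤ) :
    (6 * (n + 5) * (n + 6)) • (Wq * Kq 3 ^ 2) - (12 * (5 * n ^ 2 + 36 * n + 61)) • (Wq * Kq 3)
      + (54 * (n + 1) * (n + 4)) • Wq
    = θ₁ (certificateX n) * Kq 3 + (n + 1) • (certificateX n * θ₁ (Kq 3))
      + θ₂ (certificateY n) * Kq 3 + (n + 1) • (certificateY n * θ₂ (Kq 3))
      + (certificateRot n - ρ (certificateRot n)) := by
  simp only [Wq, Kq_eq, certificateX, certificateY, certificateRot, single_eq_smul_mono, pow_two,
    map_add, map_zsmul, weightDerivation_mono, hexRotation_mono, AddMonoidHom.coe_fst,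
    AddMonoidHom.coe_snd, mul_add, add_mul, mul_sub, sub_mul, smul_mul_assoc, mul_smul_comm,
    smul_smul, mono_mul_mono, smul_add, smul_sub, Int.reduceAdd, Int.reduceNeg, Nat.cast_ofNat,
    neg_neg, neg_zero]
  module

theorem recurrence_telescopes (n : ℕ) :
    (6 * (n + 5) * (n + 6) : ℤ) • (Wq * Kq 3 ^ (n + 2))
      - (12 * (5 * n ^ 2 + 36 * n + 61) : ℤ) • (Wq * Kq 3 ^ (n + 1))
      + (54 * (n + 1) * (n + 4) : ℤ) • (Wq * Kq 3 ^ n)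
    = θ₁ (certificateX n * Kq 3 ^ (n + 1)) + θ₂ (certificateY n * Kq 3 ^ (n + 1))
      + (certificateRot n * Kq 3 ^ n - ρ (certificateRot n * Kq 3 ^ n)) := by
  have hderiv (D : Derivation ℤ ℤ[ℤ × ℤ] ℤ[ℤ × ℤ]) (f : ℤ[ℤ × ℤ]) :
      D (f * Kq 3 ^ (n + 1)) = (D f * Kq 3 + ((n : ℤ) + 1) • (f * D (Kq 3))) * Kq 3 ^ n := by
    rw [Derivation.leibniz, Derivation.leibniz_pow]
    simp only [smul_eq_mul, zsmul_eq_mul, nsmul_eq_mul, add_tsub_cancel_right]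
    push_cast
    ring
  rw [hderiv, hderiv, map_mul, map_pow, hexRotation_Kq]
  have h := congrArg (· * Kq 3 ^ n) (certificate_identity n)
  simp only [zsmul_eq_mul] at h ⊢
  linear_combination h

theorem coeff_zero_telescoping (f g h : ℤ[ℤ × ℤ]) :
    (θ₁ f + θ₂ g + (h - ρ h)).coeff (0, 0) = 0 := by
  simp only [coeff_add, coeff_sub, Finsupp.add_apply, Finsupp.sub_apply, ← Prod.zero_eq_mk,
    coeff_zero_weightDerivation, coeff_zero_domCongr]
  ring

theorem Sq_three_zero : Sq 3 0 = 1 := by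
  simp [Sq, Wq, coeff_mono_zero]

theorem Sq_three_one : Sq 3 1 = 3 := by
  simp only [Sq, pow_one, Wq, Kq_eq, mul_add, add_mul, sub_mul, mul_smul_comm, mono_mul_mono,
    Int.reduceAdd, coeff_add, coeff_sub, coeff_smul, Finsupp.add_apply, Finsupp.sub_apply,
    Finsupp.smul_apply, coeff_mono_zero]
  norm_num

theorem Sq_three_recurrence (n : ℕ) :
    ((n : ℤ) + 5) * ((n : ℤ) + 6) * Sq 3 (n + 2)
      - 2 * (5 * (n : ℤ) ^ 2 + 36 * (n : ℤ) + 61) * Sq 3 (n + 1)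
      + 9 * ((n : ℤ) + 1) * ((n : ℤ) + 4) * Sq 3 n = 0 := by
  have h := coeff_zero_telescoping (certificateX n * Kq 3 ^ (n + 1))
    (certificateY n * Kq 3 ^ (n + 1)) (certificateRot n * Kq 3 ^ n)
  rw [← recurrence_telescopes] at h
  simp only [coeff_add, coeff_sub, coeff_smul, Finsupp.add_apply, Finsupp.sub_apply,
    Finsupp.smul_apply, smul_eq_mul] at h
  refine mul_left_cancel₀ (by norm_num : (6 : ℤ) ≠ 0) ?_
  simp only [Sq]
  linear_combination h

/-- `C₂(n) = S₃(n)` satisfies `C₂(0) = 1`, `C₂(1) = 3`, and for all `n ≥ 0`: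
`(n+5)(n+6)·C₂(n+2) − 2(5n² + 36n + 61)·C₂(n+1) + 9(n+1)(n+4)·C₂(n) = 0`. -/
theorem S3_recurrence :
    Sq 3 0 = 1 ∧ Sq 3 1 = 3 ∧
    ∀ n : ℕ,
      ((n : ℤ) + 5) * ((n : ℤ) + 6) * Sq 3 (n + 2)
      - 2 * (5 * (n : ℤ) ^ 2 + 36 * (n : ℤ) + 61) * Sq 3 (n + 1)
      + 9 * ((n : ℤ) + 1) * ((n : ℤ) + 4) * Sq 3 n = 0 :=
  ⟨Sq_three_zero, Sq_three_one, Sq_three_recurrence⟩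
end
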